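/- arXiv:1612.01673 — 6 statements merged into one kernel-verified Lean document; each statement's English description precedes it below -/
import Mathlib

section
/- Let (X, 𝒜, μ) be a monotone measure space, f : X → [0, ∞] measurable and A ∈ 𝒜. If f = 0 μ-a.e. on A, i.e. μ({x ∈ A : f(x) ≠ 0}) = 0, then ∫_A^pan f dμ = 0. Moreover, if μ is continuous from below, then ∫_A^pan f dμ = 0 if and only if f = 0 μ-a.e. on A. -/
open Set Filter
open scoped ENNReal NNReal Topology

variable {X : Type*}

/-- A monotone measure: vanishes on the empty set, positive on the whole space,
and monotone on measurable sets. -/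
structure MonotoneMeasure [MeasurableSpace X] (mu : Set X → ℝ≥0∞) : Prop where
  empty : mu ∅ = 0
  univ_pos : 0 < mu Set.univ
  mono : ∀ ⦃A B : Set X⦄, MeasurableSet A → MeasurableSet B → A ⊆ B → mu A ≤ mu B

/-- A finite measurable partition of `X`. -/
def IsPanPartition [MeasurableSpace X] {n : ℕ} (A : Fin n → Set X) : Prop :=
  (∀ i, MeasurableSet (A i)) ∧ Pairwise (Function.onFun Disjoint A) ∧ (⋃ i, A i) = Set.univ

/-- The `(+,·)`-based pan-integral of a nonnegative function on `X`. -/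
noncomputable def panIntegral [MeasurableSpace X] (mu : Set X → ℝ≥0∞) (f : X → ℝ≥0∞) : ℝ≥0∞ :=
  ⨆ (n : ℕ) (A : Fin n → Set X) (_ : IsPanPartition A) (lam : Fin n → ℝ≥0)
    (_ : ∀ x, ∑ i, Set.indicator (A i) (fun _ => (lam i : ℝ≥0∞)) x ≤ f x),
    ∑ i, (lam i : ℝ≥0∞) * mu (A i)

/-- The pan-integral of `f` on a set `A`, i.e. the pan-integral of `f·χ_A` on `X`. -/
noncomputable def panIntegralOn [MeasurableSpace X] (mu : Set X → ℝ≥0∞) (f : X → ℝ≥0∞)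
    (A : Set X) : ℝ≥0∞ :=
  panIntegral mu (A.indicator f)

/-- Subadditivity of a set function. -/
def PanSubadditive [MeasurableSpace X] (mu : Set X → ℝ≥0∞) : Prop :=
  ∀ ⦃A B : Set X⦄, MeasurableSet A → MeasurableSet B → mu (A ∪ B) ≤ mu A + mu B

/-- Null-additivity of a set function. -/
def PanNullAdditive [MeasurableSpace X] (mu : Set X → ℝ≥0∞) : Prop :=
  ∀ ⦃A B : Set X⦄, MeasurableSet A → MeasurableSet B → mu B = 0 → mu (A ∪ B) = mu A

/-- Continuity from below of a set function. -/
def PanContinuousFromBelow [MeasurableSpace X] (mu : Set X → ℝ≥0∞) : Prop :=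
  ∀ E : ℕ → Set X, (∀ n, MeasurableSet (E n)) → Monotone E →
    Filter.Tendsto (fun n => mu (E n)) Filter.atTop (nhds (mu (⋃ n, E n)))

/-- A real-valued function is pan-integrable if the pan-integrals of its
positive and negative parts are both finite. -/
def PanIntegrable [MeasurableSpace X] (mu : Set X → ℝ≥0∞) (f : X → ℝ) : Prop :=
  panIntegral mu (fun x => ENNReal.ofReal (f x)) < ⊤ ∧
    panIntegral mu (fun x => ENNReal.ofReal (-f x)) < ⊤

/-- The symmetric pan-integral of a real-valued function:
`∫ f⁺ dμ − ∫ f⁻ dμ`. -/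
noncomputable def panIntegralReal [MeasurableSpace X] (mu : Set X → ℝ≥0∞) (f : X → ℝ) : ℝ :=
  (panIntegral mu (fun x => ENNReal.ofReal (f x))).toReal -
    (panIntegral mu (fun x => ENNReal.ofReal (-f x))).toReal

/-- The `‖·‖_{μ,p}` functional: `(∫_E^pan |f|^p dμ)^(1/p)`. -/
noncomputable def panNorm [MeasurableSpace X] (mu : Set X → ℝ≥0∞) (E : Set X) (p : ℝ)
    (f : X → ℝ) : ℝ≥0∞ :=
  (panIntegralOn mu (fun x => ENNReal.ofReal (|f x| ^ p)) E) ^ (1 / p)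

/-!
A simple function `∑ λᵢ χ_{Aᵢ} ≤ g` can only put positive weight on subsets of the support of
`g`, so by monotonicity a null support forces every admissible sum, hence the pan-integral, to
vanish. Conversely, the two-set partition `{c ≤ g}, {c ≤ g}ᶜ` with weights `c, 0` shows
`c · μ {c ≤ g} ≤ ∫^pan g dμ`; if the integral vanishes, every superlevel set `{1/(n+1) ≤ g}` is
null, and continuity from below passes this to their union, the support of `g`.
-/

open Function

lemma coe_le_of_sum_indicator_le {g : X → ℝ≥0∞} {n : ℕ} {B : Fin n → Set X} {lam : Fin n → ℝ≥0}
    (hle : ∀ x, ∑ i, (B i).indicator (fun _ => (lam i : ℝ≥0∞)) x ≤ g x)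
    {i : Fin n} {x : X} (hx : x ∈ B i) : (lam i : ℝ≥0∞) ≤ g x :=
  calc (lam i : ℝ≥0∞) = (B i).indicator (fun _ => (lam i : ℝ≥0∞)) x := by
        rw [indicator_of_mem hx]
    _ ≤ ∑ j, (B j).indicator (fun _ => (lam j : ℝ≥0∞)) x :=
        Finset.single_le_sum (f := fun j => (B j).indicator (fun _ => (lam j : ℝ≥0∞)) x)
          (fun _ _ => zero_le) (Finset.mem_univ i)
    _ ≤ g x := hle x

section PanIntegral

variable [MeasurableSpace X] {mu : Set X → ℝ≥0∞} {g : X → ℝ≥0∞}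

lemma panIntegral_eq_zero_of_measure_support_eq_zero (hmu : MonotoneMeasure mu)
    (hg : Measurable g) (h : mu (support g) = 0) : panIntegral mu g = 0 := by
  refine le_antisymm (iSup_le fun n => iSup_le fun B => iSup_le fun hB => iSup_le fun lam =>
    iSup_le fun hle => (Finset.sum_eq_zero fun i _ => ?_).le) zero_le
  rcases eq_or_ne (lam i) 0 with hlam | hlam
  · simp [hlam]
  have hsub : B i ⊆ support g := fun x hx =>
    (lt_of_lt_of_le (by simpa [pos_iff_ne_zero] using hlam)
      (coe_le_of_sum_indicator_le hle hx)).ne'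
  have hnull : mu (B i) = 0 :=
    le_antisymm (h ▸ hmu.mono (hB.1 i) (measurableSet_support hg) hsub) zero_le
  simp [hnull]

lemma isPanPartition_pair_compl {E : Set X} (hE : MeasurableSet E) :
    IsPanPartition ![E, Eᶜ] := by
  refine ⟨fun i => ?_, fun i j hij => ?_, ?_⟩
  · fin_cases i
    exacts [hE, hE.compl]
  · fin_cases i <;> fin_cases j
    all_goals first
      | exact absurd rfl hij
      | simp [onFun, disjoint_compl_left, disjoint_compl_right]
  · simp [iUnion_eq_univ_iff, Fin.exists_fin_two, em]

lemma mul_le_panIntegral {E : Set X} (hE : MeasurableSet E) {c : ℝ≥0}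
    (hc : ∀ x ∈ E, (c : ℝ≥0∞) ≤ g x) : (c : ℝ≥0∞) * mu E ≤ panIntegral mu g := by
  have hle : ∀ x, ∑ i, (![E, Eᶜ] i).indicator (fun _ => ((![c, 0] i : ℝ≥0) : ℝ≥0∞)) x ≤ g x := by
    intro x
    by_cases hx : x ∈ E <;> simp [Fin.sum_univ_two, hx, hc]
  refine le_iSup_of_le 2 (le_iSup_of_le ![E, Eᶜ] (le_iSup_of_le (isPanPartition_pair_compl hE)
    (le_iSup_of_le ![c, 0] (le_iSup_of_le hle ?_))))
  simp [Fin.sum_univ_two]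

lemma measure_setOf_le_eq_zero_of_panIntegral_eq_zero (hg : Measurable g)
    (h : panIntegral mu g = 0) {c : ℝ≥0} (hc : c ≠ 0) : mu {x | (c : ℝ≥0∞) ≤ g x} = 0 := by
  have hmul : (c : ℝ≥0∞) * mu {x | (c : ℝ≥0∞) ≤ g x} ≤ panIntegral mu g :=
    mul_le_panIntegral (hg measurableSet_Ici) fun _ hx => hx
  rw [h, nonpos_iff_eq_zero, mul_eq_zero] at hmul
  exact hmul.resolve_left (by simpa using hc)

lemma measure_support_eq_zero_of_panIntegral_eq_zero (hcont : PanContinuousFromBelow mu)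
    (hg : Measurable g) (h : panIntegral mu g = 0) : mu (support g) = 0 := by
  set E : ℕ → Set X := fun n => {x | (((n + 1 : ℝ≥0)⁻¹ : ℝ≥0) : ℝ≥0∞) ≤ g x}
  have hE_mono : Monotone E := fun n m hnm x hx =>
    le_trans (ENNReal.coe_le_coe.2 (by gcongr)) hx
  have hE_null : ∀ n, mu (E n) = 0 := fun n =>
    measure_setOf_le_eq_zero_of_panIntegral_eq_zero hg h (by positivity)
  have hE_iUnion : ⋃ n, E n = support g := by
    ext x
    simp only [mem_iUnion, mem_support, E, mem_ofPred_eq]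
    constructor
    · rintro ⟨n, hn⟩ hx
      simp [hx] at hn
    · intro hx
      obtain ⟨n, hn⟩ := ENNReal.exists_inv_nat_lt hx
      refine ⟨n, le_trans ?_ hn.le⟩
      rw [ENNReal.coe_inv (by positivity)]
      gcongr
      push_cast
      exact le_self_add
  have hlim := hcont E (fun n => hg measurableSet_Ici) hE_mono
  simp only [hE_null, hE_iUnion] at hlim
  exact tendsto_nhds_unique hlim tendsto_const_nhds

end PanIntegral

theorem panIntegralOn_eq_zero_of_ae_zero_and_iff [MeasurableSpace X]
    (mu : Set X → ℝ≥0∞) (hmu : MonotoneMeasure mu)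
    (f : X → ℝ≥0∞) (hf : Measurable f)
    {A : Set X} (hA : MeasurableSet A) :
    (mu {x | x ∈ A ∧ f x ≠ 0} = 0 → panIntegralOn mu f A = 0) ∧
      (PanContinuousFromBelow mu →
        (panIntegralOn mu f A = 0 ↔ mu {x | x ∈ A ∧ f x ≠ 0} = 0)) := by
  have hg : Measurable (A.indicator f) := hf.indicator hA
  have hsupp : {x | x ∈ A ∧ f x ≠ 0} = support (A.indicator f) := support_indicator.symm
  rw [hsupp, panIntegralOn]
  exact ⟨panIntegral_eq_zero_of_measure_support_eq_zero hmu hg, fun hcont =>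
    ⟨measure_support_eq_zero_of_panIntegral_eq_zero hcont hg,
      panIntegral_eq_zero_of_measure_support_eq_zero hmu hg⟩⟩
end

section
/- Let (X, 𝒜, μ) be a monotone measure space with μ null-additive, let f, g : X → [0, ∞] be measurable and A ∈ 𝒜. If f = g μ-a.e. on A, i.e. μ({x ∈ A : f(x) ≠ g(x)}) = 0, then ∫_A^pan f dμ = ∫_A^pan g dμ. -/
open Set Filter
open scoped ENNReal NNReal Topology

variable {X : Type*}

/-!
Let `N = {x ∈ A | f x ≠ g x}`. Given a partition `P` and coefficients `λ` admissible for `f·χ_A`,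
remove `N` from every block and add `N` as a new block with coefficient `0`. By null-additivity
`μ (P i \ N) = μ (P i)`, so the lower sum is unchanged, and the new data are admissible for
`g·χ_A`, since `f·χ_A = g·χ_A` off `N`. Hence the two suprema coincide.
-/

theorem IsPanPartition.snoc_diff [MeasurableSpace X] {n : ℕ} {P : Fin n → Set X}
    (hP : IsPanPartition P) {N : Set X} (hN : MeasurableSet N) :
    IsPanPartition (Fin.snoc (fun i => P i \ N) N : Fin (n + 1) → Set X) := by
  obtain ⟨hPmeas, hPdisj, hPunion⟩ := hP
  refine ⟨Fin.lastCases (by simpa using hN) fun i => by simpa using (hPmeas i).diff hN, ?_, ?_⟩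
  · intro i j hij
    induction i using Fin.lastCases <;> induction j using Fin.lastCases
    · exact absurd rfl hij
    · simpa [Function.onFun] using disjoint_sdiff_right
    · simpa [Function.onFun] using disjoint_sdiff_left
    · simpa [Function.onFun] using
        (hPdisj (Fin.castSucc_injective _ |>.ne_iff.mp hij)).mono sdiff_le sdiff_le
  · refine eq_univ_of_forall fun x => ?_
    by_cases hx : x ∈ N
    · exact mem_iUnion.2 ⟨Fin.last n, by simpa using hx⟩
    · obtain ⟨i, hi⟩ := mem_iUnion.1 (hPunion ▸ mem_univ x)
      exact mem_iUnion.2 ⟨i.castSucc, by simpa using ⟨hi, hx⟩⟩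

theorem le_panIntegral [MeasurableSpace X] (mu : Set X → ℝ≥0∞) {f : X → ℝ≥0∞} {n : ℕ}
    {P : Fin n → Set X} (hP : IsPanPartition P) {lam : Fin n → ℝ≥0}
    (hlam : ∀ x, ∑ i, (P i).indicator (fun _ => (lam i : ℝ≥0∞)) x ≤ f x) :
    ∑ i, (lam i : ℝ≥0∞) * mu (P i) ≤ panIntegral mu f :=
  le_iSup_of_le n <| le_iSup_of_le P <| le_iSup_of_le hP <| le_iSup_of_le lam <|
    le_iSup_of_le hlam le_rfl

theorem PanNullAdditive.measure_diff_null [MeasurableSpace X] {mu : Set X → ℝ≥0∞}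
    (hna : PanNullAdditive mu) (hmu : MonotoneMeasure mu) {B N : Set X}
    (hB : MeasurableSet B) (hN : MeasurableSet N) (hN0 : mu N = 0) :
    mu (B \ N) = mu B := by
  have hBN : mu (B ∩ N) = 0 :=
    le_antisymm (hN0 ▸ hmu.mono (hB.inter hN) hN inter_subset_right) bot_le
  rw [← hna (hB.diff hN) (hB.inter hN) hBN, sdiff_union_inter]

theorem panIntegral_mono_of_le_off_null [MeasurableSpace X] {mu : Set X → ℝ≥0∞}
    (hmu : MonotoneMeasure mu) (hna : PanNullAdditive mu) {f g : X → ℝ≥0∞} {N : Set X}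
    (hN : MeasurableSet N) (hN0 : mu N = 0) (hfg : ∀ x ∉ N, f x ≤ g x) :
    panIntegral mu f ≤ panIntegral mu g := by
  refine iSup_le fun n => iSup_le fun P => iSup_le fun hP => iSup_le fun lam =>
    iSup_le fun hlam => ?_
  set Q : Fin (n + 1) → Set X := Fin.snoc (fun i => P i \ N) N
  set lam' : Fin (n + 1) → ℝ≥0 := Fin.snoc lam 0
  have hQ (i : Fin n) : Q i.castSucc = P i \ N := Fin.snoc_castSucc ..
  have hQN : Q (Fin.last n) = N := Fin.snoc_last ..
  have hsum : ∑ i, (lam i : ℝ≥0∞) * mu (P i) = ∑ i, (lam' i : ℝ≥0∞) * mu (Q i) := by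
    simp [lam', hQ, hQN, Fin.sum_univ_castSucc, hna.measure_diff_null hmu (hP.1 _) hN hN0]
  rw [hsum]
  refine le_panIntegral (P := Q) mu (hP.snoc_diff hN) fun x => ?_
  by_cases hx : x ∈ N
  · simp [lam', hQ, hQN, Fin.sum_univ_castSucc, hx]
  · calc _ = ∑ i, (P i).indicator (fun _ => (lam i : ℝ≥0∞)) x := by
          simp only [Fin.sum_univ_castSucc, hQ, hQN, lam', Fin.snoc_castSucc, Fin.snoc_last,
            ENNReal.coe_zero, indicator_zero, add_zero]
          refine Finset.sum_congr rfl fun i _ => ?_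
          by_cases hi : x ∈ P i <;> simp [hi, hx]
      _ ≤ f x := hlam x
      _ ≤ g x := hfg x hx

theorem panIntegral_congr_off_null [MeasurableSpace X] {mu : Set X → ℝ≥0∞}
    (hmu : MonotoneMeasure mu) (hna : PanNullAdditive mu) {f g : X → ℝ≥0∞} {N : Set X}
    (hN : MeasurableSet N) (hN0 : mu N = 0) (hfg : ∀ x ∉ N, f x = g x) :
    panIntegral mu f = panIntegral mu g :=
  le_antisymm (panIntegral_mono_of_le_off_null hmu hna hN hN0 fun x hx => (hfg x hx).le)
    (panIntegral_mono_of_le_off_null hmu hna hN hN0 fun x hx => (hfg x hx).ge)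

theorem panIntegralOn_congr_ae_of_nullAdditive [MeasurableSpace X]
    (mu : Set X → ℝ≥0∞) (hmu : MonotoneMeasure mu) (hna : PanNullAdditive mu)
    (f g : X → ℝ≥0∞) (hf : Measurable f) (hg : Measurable g)
    {A : Set X} (hA : MeasurableSet A)
    (hae : mu {x | x ∈ A ∧ f x ≠ g x} = 0) :
    panIntegralOn mu f A = panIntegralOn mu g A := by
  have hN : MeasurableSet {x | x ∈ A ∧ f x ≠ g x} :=
    hA.inter (measurableSet_eq_fun hf hg).compl
  refine panIntegral_congr_off_null hmu hna hN hae fun x hx => ?_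
  by_cases hxA : x ∈ A
  · simpa [hxA] using hx
  · simp [hxA]
end

section
/- (Main additivity theorem) Let (X, 𝒜, μ) be a monotone measure space with μ subadditive. Then the pan-integral is additive with respect to the integrands: for all measurable f, g : X → [0, ∞], ∫^pan (f+g) dμ = ∫^pan f dμ + ∫^pan g dμ. -/
open Set Filter
open scoped ENNReal NNReal Topology

variable {X : Type*}

/-!
For `∫ f + ∫ g ≤ ∫ (f + g)`, the common refinement of admissible partitions for `f` and `g`,
with the summed coefficients, is admissible for `f + g`, and by subadditivity refining a
partition does not decrease `∑ λᵢ μ(Aᵢ)`.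

Conversely, take an admissible `(Aᵢ, λᵢ)` for `f + g` and cut each `Aᵢ` by the level of `f` on a
grid of step `δᵢ = λᵢ/(N+1)`. Where `kδᵢ ≤ f < (k+1)δᵢ` we get `g ≥ (N-k)δᵢ`, and where
`f ≥ Nδᵢ` we use `g ≥ 0`; so on every piece `Nδᵢ` splits into a part under `f` and a part under
`g`. Subadditivity then gives `N/(N+1) · ∑ λᵢ μ(Aᵢ) ≤ ∫ f + ∫ g`; let `N → ∞`.
-/

open Finset Function

structure IsMeasurablePartition {α ι : Type*} [MeasurableSpace α] (S : ι → Set α) : Prop where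
  measurableSet : ∀ i, MeasurableSet (S i)
  pairwise_disjoint : Pairwise (Disjoint on S)
  iUnion_eq : ⋃ i, S i = univ

namespace IsMeasurablePartition

variable {α ι κ : Type*} [MeasurableSpace α] {S : ι → Set α}

theorem exists_mem (hS : IsMeasurablePartition S) (x : α) : ∃ i, x ∈ S i :=
  mem_iUnion.mp (hS.iUnion_eq ▸ mem_univ x)

theorem comp_equiv (hS : IsMeasurablePartition S) (e : κ ≃ ι) :
    IsMeasurablePartition (S ∘ e) where
  measurableSet k := hS.measurableSet (e k)
  pairwise_disjoint _ _ hkl := hS.pairwise_disjoint (e.injective.ne hkl)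
  iUnion_eq := by rw [← hS.iUnion_eq]; exact e.surjective.iUnion_comp S

theorem preimage {β : Type*} [MeasurableSpace β] {f : β → α} (hf : Measurable f)
    (hS : IsMeasurablePartition S) : IsMeasurablePartition fun i => f ⁻¹' S i where
  measurableSet i := hf (hS.measurableSet i)
  pairwise_disjoint _ _ hij := (hS.pairwise_disjoint hij).preimage f
  iUnion_eq := by rw [← preimage_iUnion, hS.iUnion_eq, preimage_univ]

theorem inter (hS : IsMeasurablePartition S) {T : ι → κ → Set α}
    (hT : ∀ i, IsMeasurablePartition (T i)) :
    IsMeasurablePartition fun p : ι × κ => S p.1 ∩ T p.1 p.2 where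
  measurableSet p := (hS.measurableSet p.1).inter ((hT p.1).measurableSet p.2)
  pairwise_disjoint := by
    rintro ⟨i, k⟩ ⟨j, l⟩ hne
    by_cases hij : i = j
    · subst hij
      have hkl : k ≠ l := fun hkl => hne (by rw [hkl])
      exact ((hT i).pairwise_disjoint hkl).mono inter_subset_right inter_subset_right
    · exact (hS.pairwise_disjoint hij).mono inter_subset_left inter_subset_left
  iUnion_eq := by
    refine eq_univ_of_forall fun x => ?_
    obtain ⟨i, hi⟩ := hS.exists_mem x
    obtain ⟨k, hk⟩ := (hT i).exists_mem x
    exact mem_iUnion.mpr ⟨(i, k), hi, hk⟩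

end IsMeasurablePartition

theorem IsPanPartition.isMeasurablePartition [MeasurableSpace X] {n : ℕ} {A : Fin n → Set X}
    (hA : IsPanPartition A) : IsMeasurablePartition A :=
  ⟨hA.1, hA.2.1, hA.2.2⟩

theorem IsMeasurablePartition.isPanPartition [MeasurableSpace X] {n : ℕ} {A : Fin n → Set X}
    (hA : IsMeasurablePartition A) : IsPanPartition A :=
  ⟨hA.measurableSet, hA.pairwise_disjoint, hA.iUnion_eq⟩

theorem isPanPartition_const_univ [MeasurableSpace X] :
    IsPanPartition fun _ : Fin 1 => (univ : Set X) :=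
  ⟨fun _ => MeasurableSet.univ, fun i j hij => absurd (Subsingleton.elim i j) hij, iUnion_const _⟩

theorem sum_indicator_le_iff {ι : Type*} [Fintype ι] {A : ι → Set X}
    (hA : Pairwise (Disjoint on A)) {v : ι → ℝ≥0∞} {f : X → ℝ≥0∞} :
    (∀ x, ∑ i, (A i).indicator (fun _ => v i) x ≤ f x) ↔ ∀ i, ∀ x ∈ A i, v i ≤ f x := by
  classical
  refine ⟨fun h i x hx => ?_, fun h x => ?_⟩
  · refine le_trans ?_ (h x)
    calc v i = (A i).indicator (fun _ => v i) x := (indicator_of_mem hx (fun _ => v i)).symm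
      _ ≤ _ := single_le_sum (f := fun j => (A j).indicator (fun _ => v j) x)
          (fun _ _ => zero_le) (mem_univ i)
  · by_cases hx : ∃ i, x ∈ A i
    · obtain ⟨i, hi⟩ := hx
      rw [sum_eq_single i (fun j _ hji => indicator_of_notMem
        (fun hj => disjoint_left.mp (hA hji) hj hi) _) (by simp), indicator_of_mem hi]
      exact h i x hi
    · simp [indicator_of_notMem (not_exists.mp hx _)]

section PanIntegral

variable [MeasurableSpace X] {mu : Set X → ℝ≥0∞} {f g h : X → ℝ≥0∞}

theorem panIntegral_le {L : ℝ≥0∞}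
    (hL : ∀ (n : ℕ) (A : Fin n → Set X), IsPanPartition A → ∀ lam : Fin n → ℝ≥0,
      (∀ i, ∀ x ∈ A i, (lam i : ℝ≥0∞) ≤ f x) → ∑ i, (lam i : ℝ≥0∞) * mu (A i) ≤ L) :
    panIntegral mu f ≤ L :=
  iSup_le fun n => iSup₂_le fun A hA => iSup₂_le fun lam hlam =>
    hL n A hA lam ((sum_indicator_le_iff hA.2.1).mp hlam)

theorem le_panIntegral_s6 {ι : Type*} [Fintype ι] {A : ι → Set X} (hA : IsMeasurablePartition A)
    {lam : ι → ℝ≥0} (hlam : ∀ i, ∀ x ∈ A i, (lam i : ℝ≥0∞) ≤ h x) :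
    ∑ i, (lam i : ℝ≥0∞) * mu (A i) ≤ panIntegral mu h := by
  let e := (Fintype.equivFin ι).symm
  have hAe := (hA.comp_equiv e).isPanPartition
  rw [← e.sum_comp]
  exact le_iSup_of_le _ <| le_iSup₂_of_le (A ∘ e) hAe <| le_iSup₂_of_le (lam ∘ e)
    ((sum_indicator_le_iff hAe.2.1).mpr fun i => hlam (e i)) le_rfl

theorem panIntegral_eq_biSup (mu : Set X → ℝ≥0∞) (f : X → ℝ≥0∞) :
    panIntegral mu f = ⨆ (q : Σ n : ℕ, (Fin n → Set X) × (Fin n → ℝ≥0))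
      (_ : IsPanPartition q.2.1 ∧ ∀ i, ∀ x ∈ q.2.1 i, (q.2.2 i : ℝ≥0∞) ≤ f x),
      ∑ i, (q.2.2 i : ℝ≥0∞) * mu (q.2.1 i) :=
  le_antisymm
    (panIntegral_le fun n A hA lam hlam =>
      le_iSup₂_of_le (f := fun (q : Σ n : ℕ, (Fin n → Set X) × (Fin n → ℝ≥0)) _ =>
        ∑ i, (q.2.2 i : ℝ≥0∞) * mu (q.2.1 i)) ⟨n, A, lam⟩ ⟨hA, hlam⟩ le_rfl)
    (iSup₂_le fun _ hq => le_panIntegral_s6 hq.1.isMeasurablePartition hq.2)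

theorem le_panIntegral_of_refinement {ι κ : Type*} [Fintype ι] [Fintype κ] {A : ι → Set X}
    (hA : IsMeasurablePartition A) {S : ι → κ → Set X} (hS : ∀ i, IsMeasurablePartition (S i))
    {v : ι → κ → ℝ≥0} (hv : ∀ i k, ∀ x ∈ A i ∩ S i k, (v i k : ℝ≥0∞) ≤ h x) :
    ∑ i, ∑ k, (v i k : ℝ≥0∞) * mu (A i ∩ S i k) ≤ panIntegral mu h := by
  rw [← Fintype.sum_prod_type']
  exact le_panIntegral_s6 (hA.inter hS) fun p => hv p.1 p.2

end PanIntegral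

section Subadditive

variable [MeasurableSpace X] {mu : Set X → ℝ≥0∞}

theorem measure_iUnion_le_sum (h0 : mu ∅ = 0) (hsub : PanSubadditive mu) {ι : Type*} [Fintype ι]
    {C : ι → Set X} (hC : ∀ i, MeasurableSet (C i)) : mu (⋃ i, C i) ≤ ∑ i, mu (C i) := by
  classical
  suffices ∀ s : Finset ι, mu (⋃ i ∈ s, C i) ≤ ∑ i ∈ s, mu (C i) by simpa using this univ
  intro s
  induction s using Finset.induction_on with
  | empty => simp [h0]
  | insert a s has ih =>
    rw [set_biUnion_insert, sum_insert has]
    exact (hsub (hC a) (.biUnion s.countable_toSet fun i _ => hC i)).trans (by gcongr; exact ih)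

theorem measure_le_sum_inter (h0 : mu ∅ = 0) (hsub : PanSubadditive mu) {ι : Type*} [Fintype ι]
    {S : ι → Set X} (hS : ∀ k, MeasurableSet (S k)) (hU : ⋃ k, S k = univ) {A : Set X}
    (hA : MeasurableSet A) : mu A ≤ ∑ k, mu (A ∩ S k) := by
  calc mu A = mu (⋃ k, A ∩ S k) := by rw [← inter_iUnion, hU, inter_univ]
    _ ≤ ∑ k, mu (A ∩ S k) := measure_iUnion_le_sum h0 hsub fun k => hA.inter (hS k)

theorem sum_mul_le_sum_sum_mul_inter (h0 : mu ∅ = 0) (hsub : PanSubadditive mu)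
    {ι κ : Type*} [Fintype ι] [Fintype κ] {A : ι → Set X} (hA : ∀ i, MeasurableSet (A i))
    {S : ι → κ → Set X} (hS : ∀ i, IsMeasurablePartition (S i)) (c : ι → ℝ≥0∞) :
    ∑ i, c i * mu (A i) ≤ ∑ i, ∑ k, c i * mu (A i ∩ S i k) := by
  gcongr with i
  rw [← mul_sum]
  gcongr
  exact measure_le_sum_inter h0 hsub (hS i).measurableSet (hS i).iUnion_eq (hA i)

theorem panIntegral_add_panIntegral_le (h0 : mu ∅ = 0) (hsub : PanSubadditive mu)
    (f g : X → ℝ≥0∞) :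
    panIntegral mu f + panIntegral mu g ≤ panIntegral mu (fun x => f x + g x) := by
  have hne : ∀ h : X → ℝ≥0∞, ∃ q : Σ n : ℕ, (Fin n → Set X) × (Fin n → ℝ≥0),
      IsPanPartition q.2.1 ∧ ∀ i, ∀ x ∈ q.2.1 i, (q.2.2 i : ℝ≥0∞) ≤ h x :=
    fun _ => ⟨⟨1, fun _ => univ, 0⟩, isPanPartition_const_univ, fun _ _ _ => by simp⟩
  rw [panIntegral_eq_biSup, panIntegral_eq_biSup]
  refine ENNReal.biSup_add_biSup_le' (hne f) (hne g) ?_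
  rintro ⟨n, A, lam⟩ ⟨hA, hlam⟩ ⟨m, B, kap⟩ ⟨hB, hkap⟩
  have hA' := hA.isMeasurablePartition
  have hB' := hB.isMeasurablePartition
  calc ∑ i, (lam i : ℝ≥0∞) * mu (A i) + ∑ k, (kap k : ℝ≥0∞) * mu (B k)
      ≤ ∑ i, ∑ k, (lam i : ℝ≥0∞) * mu (A i ∩ B k) + ∑ k, ∑ i, (kap k : ℝ≥0∞) * mu (B k ∩ A i) :=
        add_le_add (sum_mul_le_sum_sum_mul_inter h0 hsub hA'.measurableSet (fun _ => hB') _)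
          (sum_mul_le_sum_sum_mul_inter h0 hsub hB'.measurableSet (fun _ => hA') _)
    _ = ∑ i, ∑ k, ((lam i + kap k : ℝ≥0) : ℝ≥0∞) * mu (A i ∩ B k) := by
        simp only [sum_comm (γ := Fin m), inter_comm (B _), ENNReal.coe_add, add_mul,
          sum_add_distrib]
    _ ≤ panIntegral mu (fun x => f x + g x) :=
        le_panIntegral_of_refinement hA' (fun _ => hB') fun i k x hx => by
          push_cast
          exact add_le_add (hlam i x hx.1) (hkap k x hx.2)

end Subadditive

section ThresholdBand

variable {α : Type*} [LinearOrder α]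

/-- `[t k, t (k + 1))` for `k < N`, and `[t N, ∞)` for `k = N`. -/
def thresholdBand (t : ℕ → α) (N : ℕ) (k : Fin (N + 1)) : Set α :=
  {y | t k ≤ y ∧ ((k : ℕ) < N → y < t (k + 1))}

theorem pairwise_disjoint_thresholdBand {t : ℕ → α} (ht : Monotone t) (N : ℕ) :
    Pairwise (Disjoint on thresholdBand t N) := by
  refine (pairwise_disjoint_on _).mpr fun k l hkl => disjoint_left.mpr ?_
  rintro y ⟨-, hyk⟩ ⟨hly, -⟩
  have hkN : (k : ℕ) < N := lt_of_lt_of_le hkl (Nat.lt_succ_iff.mp l.2)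
  exact (hyk hkN).not_ge (le_trans (ht (Nat.succ_le_of_lt hkl)) hly)

theorem iUnion_thresholdBand {t : ℕ → α} (ht0 : IsBot (t 0)) (N : ℕ) :
    ⋃ k, thresholdBand t N k = univ := by
  refine eq_univ_of_forall fun y => mem_iUnion.mpr ?_
  let k := Nat.findGreatest (fun j => t j ≤ y) N
  refine ⟨⟨k, Nat.lt_succ_of_le (Nat.findGreatest_le N)⟩, ?_, fun hk => ?_⟩
  · exact Nat.findGreatest_spec (P := fun j => t j ≤ y) (Nat.zero_le N) (ht0 y)
  · exact not_le.mp (Nat.findGreatest_is_greatest (Nat.lt_succ_self k) hk)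

theorem isMeasurablePartition_thresholdBand [MeasurableSpace α] [TopologicalSpace α]
    [OpensMeasurableSpace α] [OrderClosedTopology α] {t : ℕ → α} (ht : Monotone t)
    (ht0 : IsBot (t 0)) (N : ℕ) : IsMeasurablePartition (thresholdBand t N) where
  measurableSet k := by
    by_cases hk : (k : ℕ) < N
    · simp only [thresholdBand, hk, true_implies]
      exact measurableSet_Ico
    · simp only [thresholdBand, hk, false_implies, and_true]
      exact measurableSet_Ici
  pairwise_disjoint := pairwise_disjoint_thresholdBand ht N
  iUnion_eq := iUnion_thresholdBand ht0 N

abbrev gridBand (δ : ℝ≥0) (N : ℕ) : Fin (N + 1) → Set ℝ≥0∞ :=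
  thresholdBand (fun j => ((j * δ : ℝ≥0) : ℝ≥0∞)) N

theorem isMeasurablePartition_gridBand (δ : ℝ≥0) (N : ℕ) :
    IsMeasurablePartition (gridBand δ N) :=
  isMeasurablePartition_thresholdBand (fun _ _ hjl => by gcongr) (fun _ => by simp) N

theorem le_of_mem_gridBand_of_le_add {δ : ℝ≥0} {N : ℕ} {k : Fin (N + 1)} {y z : ℝ≥0∞}
    (hy : y ∈ gridBand δ N k) (hyz : (((N + 1 : ℕ) * δ : ℝ≥0) : ℝ≥0∞) ≤ y + z) :
    (((N - k : ℕ) * δ : ℝ≥0) : ℝ≥0∞) ≤ z := by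
  rcases k.is_le.lt_or_eq with hk | hk
  · refine ENNReal.le_of_add_le_add_left (a := (((k + 1 : ℕ) * δ : ℝ≥0) : ℝ≥0∞))
      ENNReal.coe_ne_top ?_
    calc (((k + 1 : ℕ) * δ : ℝ≥0) : ℝ≥0∞) + (((N - k : ℕ) * δ : ℝ≥0) : ℝ≥0∞)
        = (((N + 1 : ℕ) * δ : ℝ≥0) : ℝ≥0∞) := by
          rw [← ENNReal.coe_add, ← add_mul, ← Nat.cast_add, Nat.add_right_comm,
            Nat.add_sub_cancel' hk.le]
      _ ≤ y + z := hyz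
      _ ≤ (((k + 1 : ℕ) * δ : ℝ≥0) : ℝ≥0∞) + z := by gcongr; exact (hy.2 hk).le
  · simp [hk]

end ThresholdBand

section Additive

variable [MeasurableSpace X] {mu : Set X → ℝ≥0∞} {f g : X → ℝ≥0∞}

theorem sum_mul_le_panIntegral_add_of_split (h0 : mu ∅ = 0) (hsub : PanSubadditive mu)
    {ι κ : Type*} [Fintype ι] [Fintype κ] {A : ι → Set X} (hA : IsMeasurablePartition A)
    {S : ι → κ → Set X} (hS : ∀ i, IsMeasurablePartition (S i)) {a b : ι → κ → ℝ≥0}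
    {c : ι → ℝ≥0} (hc : ∀ i k, c i ≤ a i k + b i k)
    (ha : ∀ i k, ∀ x ∈ A i ∩ S i k, (a i k : ℝ≥0∞) ≤ f x)
    (hb : ∀ i k, ∀ x ∈ A i ∩ S i k, (b i k : ℝ≥0∞) ≤ g x) :
    ∑ i, (c i : ℝ≥0∞) * mu (A i) ≤ panIntegral mu f + panIntegral mu g :=
  calc ∑ i, (c i : ℝ≥0∞) * mu (A i)
      ≤ ∑ i, ∑ k, (c i : ℝ≥0∞) * mu (A i ∩ S i k) :=
        sum_mul_le_sum_sum_mul_inter h0 hsub hA.measurableSet hS _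
    _ ≤ ∑ i, ∑ k, ((a i k + b i k : ℝ≥0) : ℝ≥0∞) * mu (A i ∩ S i k) := by
        gcongr with i _ k _
        exact hc i k
    _ = ∑ i, ∑ k, (a i k : ℝ≥0∞) * mu (A i ∩ S i k) +
          ∑ i, ∑ k, (b i k : ℝ≥0∞) * mu (A i ∩ S i k) := by
        simp only [ENNReal.coe_add, add_mul, sum_add_distrib]
    _ ≤ panIntegral mu f + panIntegral mu g :=
        add_le_add (le_panIntegral_of_refinement hA hS ha) (le_panIntegral_of_refinement hA hS hb)

theorem div_mul_sum_le_panIntegral_add (h0 : mu ∅ = 0) (hsub : PanSubadditive mu)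
    (hf : Measurable f) {ι : Type*} [Fintype ι] {A : ι → Set X} (hA : IsMeasurablePartition A)
    {lam : ι → ℝ≥0} (hlam : ∀ i, ∀ x ∈ A i, (lam i : ℝ≥0∞) ≤ f x + g x) (N : ℕ) :
    ((N / (N + 1) : ℝ≥0) : ℝ≥0∞) * ∑ i, (lam i : ℝ≥0∞) * mu (A i) ≤
      panIntegral mu f + panIntegral mu g := by
  set δ : ι → ℝ≥0 := fun i => lam i / (N + 1)
  have hlam_eq : ∀ i, lam i = (N + 1 : ℕ) * δ i := fun i => by
    rw [Nat.cast_succ, mul_div_cancel₀ _ (Nat.cast_add_one_ne_zero N)]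
  have hcoef : ∀ i, ((N / (N + 1) : ℝ≥0) : ℝ≥0∞) * ((lam i : ℝ≥0∞) * mu (A i)) =
      ((N * δ i : ℝ≥0) : ℝ≥0∞) * mu (A i) := fun i => by
    rw [← mul_assoc, ← ENNReal.coe_mul, div_mul_eq_mul_div, mul_div_assoc]
  rw [mul_sum]
  simp only [hcoef]
  refine sum_mul_le_panIntegral_add_of_split h0 hsub hA
    (S := fun i k => f ⁻¹' gridBand (δ i) N k)
    (fun i => (isMeasurablePartition_gridBand _ N).preimage hf)
    (a := fun i k => (k : ℕ) * δ i) (b := fun i k => (N - k : ℕ) * δ i)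
    (fun i k => ?_) (fun i k x hx => hx.2.1) (fun i k x hx => ?_)
  · rw [← add_mul, ← Nat.cast_add, Nat.add_sub_cancel' k.is_le]
  · exact le_of_mem_gridBand_of_le_add hx.2 (hlam_eq i ▸ hlam i x hx.1)

theorem panIntegral_add_le (h0 : mu ∅ = 0) (hsub : PanSubadditive mu) (hf : Measurable f)
    (g : X → ℝ≥0∞) :
    panIntegral mu (fun x => f x + g x) ≤ panIntegral mu f + panIntegral mu g := by
  refine panIntegral_le fun n A hA lam hlam => ?_
  have hlim : Tendsto (fun N : ℕ => ((N / (N + 1) : ℝ≥0) : ℝ≥0∞) * ∑ i, (lam i : ℝ≥0∞) * mu (A i))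
      atTop (𝓝 (∑ i, (lam i : ℝ≥0∞) * mu (A i))) := by
    simpa using ENNReal.Tendsto.mul_const
      (ENNReal.tendsto_coe.mpr (tendsto_natCast_div_add_atTop (1 : ℝ≥0)))
      (Or.inl one_ne_zero)
  exact le_of_tendsto' hlim
    (div_mul_sum_le_panIntegral_add h0 hsub hf hA.isMeasurablePartition hlam)

end Additive

theorem panIntegral_add_of_subadditive_general [MeasurableSpace X]
    (mu : Set X → ℝ≥0∞) (hmu : MonotoneMeasure mu) (hsub : PanSubadditive mu)
    (f g : X → ℝ≥0∞) (hf : Measurable f) :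
    panIntegral mu (fun x => f x + g x) = panIntegral mu f + panIntegral mu g :=
  le_antisymm (panIntegral_add_le hmu.empty hsub hf g)
    (panIntegral_add_panIntegral_le hmu.empty hsub f g)

theorem panIntegral_add_of_subadditive [MeasurableSpace X]
    (mu : Set X → ℝ≥0∞) (hmu : MonotoneMeasure mu) (hsub : PanSubadditive mu)
    (f g : X → ℝ≥0∞) (hf : Measurable f) (hg : Measurable g) :
    panIntegral mu (fun x => f x + g x) = panIntegral mu f + panIntegral mu g :=
  panIntegral_add_of_subadditive_general mu hmu hsub f g hf
end

section
/- (Positive-sets-disjointness superadditivity) Let (X, 𝒜, μ) be a monotone measure space and f, g : X → [0, ∞] measurable. If the positive sets of f and g are disjoint, i.e. {x : f(x) > 0} ∩ {x : g(x) > 0} = ∅, then ∫^pan (f+g) dμ ≥ ∫^pan f dμ + ∫^pan g dμ. -/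
open Set Filter
open scoped ENNReal NNReal Topology

variable {X : Type*}

/-!
Superadditivity is witnessed term by term in the supremum: given admissible simple functions
below `f` and below `g`, discard their sets with coefficient `0`. The remaining sets of the first
lie in `{f > 0}`, those of the second in `{g > 0}`, so together they form a disjoint family; adding
the complement of its union with coefficient `0` yields an admissible simple function below
`f + g` whose value is the sum of the two values.
-/

section

open Function

variable [MeasurableSpace X]

/-- A term of the supremum defining `panIntegral mu f`: the simple function
`∑ i, coeff i • χ_{set i}` on a finite measurable partition, lying below `f`. -/
structure PanAdmissible (f : X → ℝ≥0∞) where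
  n : ℕ
  set : Fin n → Set X
  coeff : Fin n → ℝ≥0
  isPanPartition : IsPanPartition set
  sum_indicator_le : ∀ x, ∑ i, (set i).indicator (fun _ => (coeff i : ℝ≥0∞)) x ≤ f x

namespace PanAdmissible

variable {f : X → ℝ≥0∞}

instance : Nonempty (PanAdmissible f) :=
  ⟨⟨1, fun _ => univ, fun _ => 0, ⟨fun _ => .univ, Subsingleton.pairwise, iUnion_const _⟩,
    fun x => by simp⟩⟩

noncomputable def sum (mu : Set X → ℝ≥0∞) (s : PanAdmissible f) : ℝ≥0∞ :=
  ∑ i, (s.coeff i : ℝ≥0∞) * mu (s.set i)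

theorem sum_le_panIntegral (mu : Set X → ℝ≥0∞) (s : PanAdmissible f) :
    s.sum mu ≤ panIntegral mu f :=
  le_iSup_of_le s.n <| le_iSup_of_le s.set <| le_iSup_of_le s.isPanPartition <|
    le_iSup_of_le s.coeff <| le_iSup_of_le s.sum_indicator_le le_rfl

theorem coeff_le_of_mem {s : PanAdmissible f} {i : Fin s.n} {x : X} (hx : x ∈ s.set i) :
    (s.coeff i : ℝ≥0∞) ≤ f x :=
  calc (s.coeff i : ℝ≥0∞) = (s.set i).indicator (fun _ => (s.coeff i : ℝ≥0∞)) x := by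
        rw [indicator_of_mem hx]
    _ ≤ ∑ k, (s.set k).indicator (fun _ => (s.coeff k : ℝ≥0∞)) x :=
        Finset.single_le_sum (f := fun k => (s.set k).indicator (fun _ => (s.coeff k : ℝ≥0∞)) x)
          (fun k _ => zero_le) (Finset.mem_univ i)
    _ ≤ f x := s.sum_indicator_le x

def posSet (s : PanAdmissible f) (i : Fin s.n) : Set X :=
  s.set i ∩ {_x | s.coeff i ≠ 0}

theorem measurableSet_posSet (s : PanAdmissible f) (i : Fin s.n) : MeasurableSet (s.posSet i) :=
  (s.isPanPartition.1 i).inter (.const _)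

theorem pairwise_disjoint_posSet (s : PanAdmissible f) : Pairwise (Disjoint on s.posSet) :=
  fun _ _ hij => (s.isPanPartition.2.1 hij).mono inter_subset_left inter_subset_left

theorem posSet_subset_pos (s : PanAdmissible f) (i : Fin s.n) : s.posSet i ⊆ {x | 0 < f x} :=
  fun _ ⟨hx, hi⟩ => (ENNReal.coe_pos.mpr (pos_iff_ne_zero.mpr hi)).trans_le (coeff_le_of_mem hx)

theorem indicator_posSet (s : PanAdmissible f) (i : Fin s.n) :
    (s.posSet i).indicator (fun _ => (s.coeff i : ℝ≥0∞)) =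
      (s.set i).indicator (fun _ => (s.coeff i : ℝ≥0∞)) := by
  by_cases hi : s.coeff i = 0 <;> simp [posSet, hi]

theorem coeff_mul_posSet (mu : Set X → ℝ≥0∞) (s : PanAdmissible f) (i : Fin s.n) :
    (s.coeff i : ℝ≥0∞) * mu (s.posSet i) = s.coeff i * mu (s.set i) := by
  by_cases hi : s.coeff i = 0 <;> simp [posSet, hi]

end PanAdmissible

theorem panIntegral_eq_iSup (mu : Set X → ℝ≥0∞) (f : X → ℝ≥0∞) :
    panIntegral mu f = ⨆ s : PanAdmissible f, s.sum mu :=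
  le_antisymm
    (iSup_le fun n => iSup_le fun A => iSup_le fun hA => iSup_le fun lam => iSup_le fun hle =>
      le_iSup_of_le ⟨n, A, lam, hA, hle⟩ le_rfl)
    (iSup_le (PanAdmissible.sum_le_panIntegral mu))

theorem sum_le_panIntegral_of_partition {ι : Type*} [Fintype ι] (mu : Set X → ℝ≥0∞)
    {f : X → ℝ≥0∞} {A : ι → Set X} (lam : ι → ℝ≥0) (hA : ∀ i, MeasurableSet (A i))
    (hdisj : Pairwise (Disjoint on A)) (hcover : ⋃ i, A i = univ)
    (hle : ∀ x, ∑ i, (A i).indicator (fun _ => (lam i : ℝ≥0∞)) x ≤ f x) :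
    ∑ i, (lam i : ℝ≥0∞) * mu (A i) ≤ panIntegral mu f := by
  let e := (Fintype.equivFin ι).symm
  let s : PanAdmissible f :=
    { n := Fintype.card ι
      set := A ∘ e
      coeff := lam ∘ e
      isPanPartition := ⟨fun k => hA (e k), fun k l hkl => hdisj (e.injective.ne hkl),
        by simpa only [comp_apply, e.surjective.iUnion_comp A] using hcover⟩
      sum_indicator_le := fun x =>
        (e.sum_comp fun i => (A i).indicator (fun _ => (lam i : ℝ≥0∞)) x).trans_le (hle x) }
  calc ∑ i, (lam i : ℝ≥0∞) * mu (A i) = s.sum mu :=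
        (e.sum_comp fun i => (lam i : ℝ≥0∞) * mu (A i)).symm
    _ ≤ panIntegral mu f := s.sum_le_panIntegral mu

/-- The complement of the family's union is added with coefficient `0`. -/
theorem sum_le_panIntegral_of_pairwise_disjoint {ι : Type*} [Fintype ι] (mu : Set X → ℝ≥0∞)
    {f : X → ℝ≥0∞} {A : ι → Set X} (lam : ι → ℝ≥0) (hA : ∀ i, MeasurableSet (A i))
    (hdisj : Pairwise (Disjoint on A))
    (hle : ∀ x, ∑ i, (A i).indicator (fun _ => (lam i : ℝ≥0∞)) x ≤ f x) :
    ∑ i, (lam i : ℝ≥0∞) * mu (A i) ≤ panIntegral mu f := by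
  let A' : Option ι → Set X := fun o => o.elim (⋃ i, A i)ᶜ A
  let lam' : Option ι → ℝ≥0 := fun o => o.elim 0 lam
  have hA' : ∀ o, MeasurableSet (A' o) := by
    rintro (_ | i)
    exacts [(MeasurableSet.iUnion hA).compl, hA i]
  have hdisj' : Pairwise (Disjoint on A') := by
    rintro (_ | i) (_ | j) hij
    · exact absurd rfl hij
    · exact disjoint_compl_left.mono_right (subset_iUnion A j)
    · exact disjoint_compl_left.mono_right (subset_iUnion A i) |>.symm
    · exact hdisj (Option.some_injective _ |>.ne_iff.mp hij)
  have hcover' : ⋃ o, A' o = univ := by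
    rw [iUnion_option]
    exact compl_union_self _
  have hle' : ∀ x, ∑ o, (A' o).indicator (fun _ => (lam' o : ℝ≥0∞)) x ≤ f x := by
    simpa only [A', lam', Fintype.sum_option, Option.elim_none, Option.elim_some,
      ENNReal.coe_zero, indicator_zero, zero_add] using hle
  simpa only [A', lam', Fintype.sum_option, Option.elim_none, Option.elim_some, ENNReal.coe_zero,
    zero_mul, zero_add] using
    sum_le_panIntegral_of_partition mu lam' hA' hdisj' hcover' hle'

theorem PanAdmissible.sum_add_sum_le_panIntegral_add (mu : Set X → ℝ≥0∞) {f g : X → ℝ≥0∞}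
    (hfg : Disjoint {x | 0 < f x} {x | 0 < g x}) (s : PanAdmissible f) (t : PanAdmissible g) :
    s.sum mu + t.sum mu ≤ panIntegral mu (fun x => f x + g x) := by
  let A : Fin s.n ⊕ Fin t.n → Set X := Sum.elim s.posSet t.posSet
  let lam : Fin s.n ⊕ Fin t.n → ℝ≥0 := Sum.elim s.coeff t.coeff
  have hA : ∀ k, MeasurableSet (A k) := by
    rintro (i | j)
    exacts [s.measurableSet_posSet i, t.measurableSet_posSet j]
  have hdisj : Pairwise (Disjoint on A) := by
    rintro (i | i) (j | j) hij
    · exact s.pairwise_disjoint_posSet (ne_of_apply_ne Sum.inl hij)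
    · exact hfg.mono (s.posSet_subset_pos i) (t.posSet_subset_pos j)
    · exact (hfg.mono (s.posSet_subset_pos j) (t.posSet_subset_pos i)).symm
    · exact t.pairwise_disjoint_posSet (ne_of_apply_ne Sum.inr hij)
  have hle : ∀ x, ∑ k, (A k).indicator (fun _ => (lam k : ℝ≥0∞)) x ≤ f x + g x := fun x => by
    simpa only [A, lam, Fintype.sum_sum_type, Sum.elim_inl, Sum.elim_inr, indicator_posSet] using
      add_le_add (s.sum_indicator_le x) (t.sum_indicator_le x)
  calc s.sum mu + t.sum mu = ∑ k, (lam k : ℝ≥0∞) * mu (A k) := by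
        simp only [A, lam, Fintype.sum_sum_type, Sum.elim_inl, Sum.elim_inr, coeff_mul_posSet,
          sum]
    _ ≤ _ := sum_le_panIntegral_of_pairwise_disjoint mu lam hA hdisj hle

end

theorem panIntegral_superadditive_of_disjoint_pos_sets_general [MeasurableSpace X]
    (mu : Set X → ℝ≥0∞)
    (f g : X → ℝ≥0∞)
    (hdisj : {x | 0 < f x} ∩ {x | 0 < g x} = ∅) :
    panIntegral mu f + panIntegral mu g ≤ panIntegral mu (fun x => f x + g x) := by
  rw [panIntegral_eq_iSup mu f, panIntegral_eq_iSup mu g]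
  exact ENNReal.iSup_add_iSup_le
    (PanAdmissible.sum_add_sum_le_panIntegral_add mu (disjoint_iff_inter_eq_empty.mpr hdisj))

theorem panIntegral_superadditive_of_disjoint_pos_sets [MeasurableSpace X]
    (mu : Set X → ℝ≥0∞) (hmu : MonotoneMeasure mu)
    (f g : X → ℝ≥0∞) (hf : Measurable f) (hg : Measurable g)
    (hdisj : {x | 0 < f x} ∩ {x | 0 < g x} = ∅) :
    panIntegral mu f + panIntegral mu g ≤ panIntegral mu (fun x => f x + g x) :=
  panIntegral_superadditive_of_disjoint_pos_sets_general mu f g hdisj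
end

section
/- Let (X, 𝒜, μ) be a monotone measure space with μ subadditive and let f, g : X → [0, ∞] be measurable. Then f + g is pan-integrable (i.e. ∫^pan (f+g) dμ < ∞) if and only if both f and g are pan-integrable. In particular, ∫^pan (f+g) dμ ≤ 2( ∫^pan f dμ + ∫^pan g dμ ). -/
open Set Filter
open scoped ENNReal NNReal Topology

variable {X : Type*}

lemma sum_indicator_eq_of_mem [MeasurableSpace X] {m : ℕ} {S : Fin m → Set X}
    (hdisj : Pairwise (Function.onFun Disjoint S)) (c : Fin m → ℝ≥0∞) {x : X} {i : Fin m}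
    (hx : x ∈ S i) :
    ∑ j, (S j).indicator (fun _ => c j) x = c i := by
  rw [Finset.sum_eq_single_of_mem i (Finset.mem_univ i)]
  · exact Set.indicator_of_mem hx _
  · intro j _ hj
    exact Set.indicator_of_notMem (fun hxj => (Set.disjoint_left.mp (hdisj hj)) hxj hx) _

lemma sum_indicator_le' [MeasurableSpace X] {m : ℕ} {S : Fin m → Set X}
    (hdisj : Pairwise (Function.onFun Disjoint S)) (c : Fin m → ℝ≥0∞) {x : X} {v : ℝ≥0∞}
    (h : ∀ i, x ∈ S i → c i ≤ v) :
    ∑ j, (S j).indicator (fun _ => c j) x ≤ v := by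
  by_cases hx : ∃ i, x ∈ S i
  · obtain ⟨i, hi⟩ := hx
    rw [sum_indicator_eq_of_mem hdisj c hi]
    exact h i hi
  · push_neg at hx
    have hz : ∀ j : Fin m, (S j).indicator (fun _ => c j) x = 0 := fun j =>
      Set.indicator_of_notMem (hx j) _
    simp [hz]

lemma panIntegral_mono [MeasurableSpace X] (mu : Set X → ℝ≥0∞) {f g : X → ℝ≥0∞}
    (hfg : ∀ x, f x ≤ g x) : panIntegral mu f ≤ panIntegral mu g := by
  refine iSup_le fun n => iSup_le fun A => iSup_le fun hA => iSup_le fun lam =>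
    iSup_le fun h => ?_
  exact le_iSup_of_le n (le_iSup_of_le A (le_iSup_of_le hA (le_iSup_of_le lam
    (le_iSup_of_le (fun x => (h x).trans (hfg x)) le_rfl))))

lemma panIntegral_simple_le [MeasurableSpace X] (mu : Set X → ℝ≥0∞) (f : X → ℝ≥0∞)
    {n : ℕ} (A : Fin n → Set X) (hA : IsPanPartition A) (lam : Fin n → ℝ≥0)
    (h : ∀ x, ∑ i, Set.indicator (A i) (fun _ => (lam i : ℝ≥0∞)) x ≤ f x) :
    ∑ i, (lam i : ℝ≥0∞) * mu (A i) ≤ panIntegral mu f :=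
  le_iSup_of_le n (le_iSup_of_le A (le_iSup_of_le hA (le_iSup_of_le lam
    (le_iSup_of_le h le_rfl))))

theorem panIntegral_add_lt_top_iff [MeasurableSpace X]
    (mu : Set X → ℝ≥0∞) (hmu : MonotoneMeasure mu) (hsub : PanSubadditive mu)
    (f g : X → ℝ≥0∞) (hf : Measurable f) (hg : Measurable g) :
    (panIntegral mu (fun x => f x + g x) < ⊤ ↔
      panIntegral mu f < ⊤ ∧ panIntegral mu g < ⊤) ∧
      panIntegral mu (fun x => f x + g x) ≤
        2 * (panIntegral mu f + panIntegral mu g) := by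
  -- Key bound: ∫(f+g) ≤ 2(∫f + ∫g)
  have key : panIntegral mu (fun x => f x + g x) ≤
      2 * (panIntegral mu f + panIntegral mu g) := by
    refine iSup_le fun n => iSup_le fun A => iSup_le fun hA => iSup_le fun lam =>
      iSup_le fun hlam => ?_
    obtain ⟨hAm, hAdisj, hAuniv⟩ := hA
    -- half values
    set c : Fin n → ℝ≥0 := fun i => lam i / 2 with hc
    have hcc : ∀ i, (c i : ℝ≥0∞) + (c i : ℝ≥0∞) = (lam i : ℝ≥0∞) := by
      intro i
      rw [← ENNReal.coe_add]
      norm_cast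
      rw [hc]
      exact add_halves (lam i)
    -- split each A i
    set B : Fin n → Set X := fun i => A i ∩ {x | (c i : ℝ≥0∞) ≤ f x} with hB
    set C : Fin n → Set X := fun i => A i \ B i with hCdef
    have hBm : ∀ i, MeasurableSet (B i) :=
      fun i => (hAm i).inter (measurableSet_le measurable_const hf)
    have hCm : ∀ i, MeasurableSet (C i) := fun i => (hAm i).diff (hBm i)
    have hBsub : ∀ i, B i ⊆ A i := fun i => Set.inter_subset_left
    have hCsub : ∀ i, C i ⊆ A i := fun i => Set.diff_subset
    -- on C i, g is large
    have hCg : ∀ i, ∀ x ∈ C i, (c i : ℝ≥0∞) ≤ g x := by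
      intro i x hx
      have hxA : x ∈ A i := hx.1
      have hxf : ¬ (c i : ℝ≥0∞) ≤ f x := by
        intro hle
        exact hx.2 ⟨hxA, hle⟩
      have hlami : (lam i : ℝ≥0∞) ≤ f x + g x := by
        have := hlam x
        rwa [sum_indicator_eq_of_mem hAdisj (fun j => (lam j : ℝ≥0∞)) hxA] at this
      by_contra hle
      push_neg at hle
      push_neg at hxf
      have : f x + g x < (c i : ℝ≥0∞) + (c i : ℝ≥0∞) := ENNReal.add_lt_add hxf hle
      rw [hcc i] at this
      exact absurd hlami (not_le.mpr this)
    have hBf : ∀ i, ∀ x ∈ B i, (c i : ℝ≥0∞) ≤ f x := fun i x hx => hx.2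
    -- combined partition on Fin (n + n)
    set e := (finSumFinEquiv : Fin n ⊕ Fin n ≃ Fin (n + n)) with he
    set D : Fin n ⊕ Fin n → Set X := Sum.elim B C with hD
    set P : Fin (n + n) → Set X := fun k => D (e.symm k) with hP
    have hDdisj : ∀ a b : Fin n ⊕ Fin n, a ≠ b → Disjoint (D a) (D b) := by
      rintro (i | i) (j | j) hab
      · exact (hAdisj (by simpa using hab)).mono (hBsub i) (hBsub j)
      · rcases eq_or_ne i j with rfl | hij
        · exact disjoint_sdiff_right
        · exact (hAdisj hij).mono (hBsub i) (hCsub j)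
      · rcases eq_or_ne i j with rfl | hij
        · exact disjoint_sdiff_left
        · exact (hAdisj hij).mono (hCsub i) (hBsub j)
      · exact (hAdisj (by simpa using hab)).mono (hCsub i) (hCsub j)
    have hPdisj : Pairwise (Function.onFun Disjoint P) := by
      intro k k' hkk'
      exact hDdisj _ _ (fun h' => hkk' (by
        have := congrArg e h'
        simpa using this))
    have hPm : ∀ k, MeasurableSet (P k) := by
      intro k
      rcases hek : (e.symm k) with i | i
      · simp only [hP, hD, hek, Sum.elim_inl]
        exact hBm i
      · simp only [hP, hD, hek, Sum.elim_inr]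
        exact hCm i
    have hPuniv : (⋃ k, P k) = Set.univ := by
      apply Set.eq_univ_iff_forall.mpr
      intro x
      have hx : x ∈ ⋃ i, A i := hAuniv ▸ Set.mem_univ x
      obtain ⟨i, hi⟩ := Set.mem_iUnion.mp hx
      by_cases hxB : x ∈ B i
      · refine Set.mem_iUnion.mpr ⟨e (Sum.inl i), ?_⟩
        simp [hP, hD, hxB]
      · refine Set.mem_iUnion.mpr ⟨e (Sum.inr i), ?_⟩
        simp only [hP, hD, Equiv.symm_apply_apply, Sum.elim_inr]
        exact ⟨hi, hxB⟩
    have hPpart : IsPanPartition P := ⟨hPm, hPdisj, hPuniv⟩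
    -- simple functions for f and g
    set lamF : Fin (n + n) → ℝ≥0 := fun k => Sum.elim c (fun _ => 0) (e.symm k) with hlF
    set lamG : Fin (n + n) → ℝ≥0 := fun k => Sum.elim (fun _ => 0) c (e.symm k) with hlG
    have hFle : ∀ x, ∑ k, Set.indicator (P k) (fun _ => (lamF k : ℝ≥0∞)) x ≤ f x := by
      intro x
      refine sum_indicator_le' hPdisj _ fun k hk => ?_
      rcases hek : e.symm k with i | i
      · simp only [hlF, hek, Sum.elim_inl]
        have : x ∈ B i := by
          simp only [hP, hD, hek, Sum.elim_inl] at hk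
          exact hk
        exact hBf i x this
      · simp [hlF, hek]
    have hGle : ∀ x, ∑ k, Set.indicator (P k) (fun _ => (lamG k : ℝ≥0∞)) x ≤ g x := by
      intro x
      refine sum_indicator_le' hPdisj _ fun k hk => ?_
      rcases hek : e.symm k with i | i
      · simp [hlG, hek]
      · simp only [hlG, hek, Sum.elim_inr]
        have : x ∈ C i := by
          simp only [hP, hD, hek, Sum.elim_inr] at hk
          exact hk
        exact hCg i x this
    have hSB : ∑ i, (c i : ℝ≥0∞) * mu (B i) ≤ panIntegral mu f := by
      have h1 := panIntegral_simple_le mu f P hPpart lamF hFle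
      have h2 : ∑ k, (lamF k : ℝ≥0∞) * mu (P k) = ∑ i, (c i : ℝ≥0∞) * mu (B i) := by
        rw [← Fintype.sum_equiv e (fun a => (lamF (e a) : ℝ≥0∞) * mu (P (e a)))
          (fun k => (lamF k : ℝ≥0∞) * mu (P k)) (fun a => rfl)]
        rw [Fintype.sum_sum_type]
        simp [hlF, hP, hD]
      rwa [h2] at h1
    have hSC : ∑ i, (c i : ℝ≥0∞) * mu (C i) ≤ panIntegral mu g := by
      have h1 := panIntegral_simple_le mu g P hPpart lamG hGle
      have h2 : ∑ k, (lamG k : ℝ≥0∞) * mu (P k) = ∑ i, (c i : ℝ≥0∞) * mu (C i) := by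
        rw [← Fintype.sum_equiv e (fun a => (lamG (e a) : ℝ≥0∞) * mu (P (e a)))
          (fun k => (lamG k : ℝ≥0∞) * mu (P k)) (fun a => rfl)]
        rw [Fintype.sum_sum_type]
        simp [hlG, hP, hD]
      rwa [h2] at h1
    -- put together
    have hμA : ∀ i, mu (A i) ≤ mu (B i) + mu (C i) := by
      intro i
      have hAeq : A i = B i ∪ C i := by
        rw [hCdef]
        rw [Set.union_diff_cancel' (le_refl (B i)) (hBsub i)]
      calc mu (A i) = mu (B i ∪ C i) := by rw [hAeq]
        _ ≤ mu (B i) + mu (C i) := hsub (hBm i) (hCm i)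
    calc ∑ i, (lam i : ℝ≥0∞) * mu (A i)
        ≤ ∑ i, ((c i : ℝ≥0∞) + c i) * (mu (B i) + mu (C i)) := by
          refine Finset.sum_le_sum fun i _ => ?_
          rw [hcc i]
          exact mul_le_mul_right (hμA i) _
      _ = ∑ i, 2 * ((c i : ℝ≥0∞) * mu (B i) + (c i : ℝ≥0∞) * mu (C i)) := by
          refine Finset.sum_congr rfl fun i _ => ?_
          ring
      _ = 2 * (∑ i, (c i : ℝ≥0∞) * mu (B i) + ∑ i, (c i : ℝ≥0∞) * mu (C i)) := by
          rw [← Finset.mul_sum, Finset.sum_add_distrib]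
      _ ≤ 2 * (panIntegral mu f + panIntegral mu g) :=
          mul_le_mul_right (add_le_add hSB hSC) _
  refine ⟨⟨fun h => ?_, fun ⟨h1, h2⟩ => ?_⟩, key⟩
  · constructor
    · exact lt_of_le_of_lt (panIntegral_mono mu fun x => le_self_add) h
    · exact lt_of_le_of_lt (panIntegral_mono mu fun x => le_add_self) h
  · refine lt_of_le_of_lt key ?_
    exact ENNReal.mul_lt_top (by norm_num) (ENNReal.add_lt_top.mpr ⟨h1, h2⟩)
end

section
/- (Levi / monotone convergence for the pan-integral) Let (X, 𝒜, μ) be a monotone measure space with μ continuous from below, let E ∈ 𝒜, and let f_k : E → [0, ∞] be an increasing sequence of measurable functions (f_k ≤ f_{k+1} for each k) with pointwise limit f(x) = lim_{k→∞} f_k(x) for x ∈ E. Then lim_{k→∞} ∫_E^pan f_k dμ = ∫_E^pan f dμ. -/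
open Set Filter
open scoped ENNReal NNReal Topology

variable {X : Type*}

/-! Given a step function `s = ∑ λᵢ χ_{Aᵢ} ≤ ⨆ₖ Fₖ` and `c < 1`, the measurable sets
`Bₖ = {c·s ≤ Fₖ}` increase to `X`. On the partition `(Bₖᶜ, Aᵢ ∩ Bₖ)` the step function
`c·s·χ_{Bₖ}` lies below `Fₖ`, so `∑ c λᵢ μ(Aᵢ ∩ Bₖ) ≤ ∫ Fₖ`; continuity of `μ` from below
lets `k → ∞`, and then `c → 1`. -/

namespace PanIntegral

noncomputable def stepFun {n : ℕ} (A : Fin n → Set X) (lam : Fin n → ℝ≥0) (x : X) : ℝ≥0∞ :=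
  ∑ i, (A i).indicator (fun _ => (lam i : ℝ≥0∞)) x

theorem measurable_stepFun [MeasurableSpace X] {n : ℕ} {A : Fin n → Set X}
    (hA : ∀ i, MeasurableSet (A i)) (lam : Fin n → ℝ≥0) : Measurable (stepFun A lam) :=
  Finset.measurable_sum _ fun i _ => measurable_const.indicator (hA i)

theorem stepFun_ne_top {n : ℕ} (A : Fin n → Set X) (lam : Fin n → ℝ≥0) (x : X) :
    stepFun A lam x ≠ ∞ :=
  ENNReal.sum_ne_top.2 fun i _ => by
    by_cases hx : x ∈ A i <;> simp [indicator_of_mem, indicator_of_notMem, hx]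

theorem stepFun_smul {n : ℕ} (A : Fin n → Set X) (lam : Fin n → ℝ≥0) (c : ℝ≥0) (x : X) :
    stepFun A (c • lam) x = c * stepFun A lam x := by
  simp only [stepFun, Finset.mul_sum]
  refine Finset.sum_congr rfl fun i _ => ?_
  by_cases hx : x ∈ A i <;> simp [hx]

def restrictPartition {n : ℕ} (A : Fin n → Set X) (B : Set X) : Fin (n + 1) → Set X :=
  Fin.cons Bᶜ fun i => A i ∩ B

theorem isPanPartition_restrictPartition [MeasurableSpace X] {n : ℕ} {A : Fin n → Set X}
    (hA : IsPanPartition A) {B : Set X} (hB : MeasurableSet B) :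
    IsPanPartition (restrictPartition A B) := by
  obtain ⟨hmeas, hdisj, hcover⟩ := hA
  refine ⟨Fin.cases hB.compl fun i => (hmeas i).inter hB, ?_, ?_⟩
  · have hcompl : ∀ i, Disjoint Bᶜ (A i ∩ B) := fun i =>
      disjoint_compl_left.mono_right inter_subset_right
    intro j j' hjj'
    cases j using Fin.cases <;> cases j' using Fin.cases
    · exact absurd rfl hjj'
    · exact hcompl _
    · exact (hcompl _).symm
    · exact (hdisj (Fin.succ_injective _ |>.ne_iff.1 hjj')).mono
        inter_subset_left inter_subset_left
  · refine eq_univ_of_forall fun x => mem_iUnion.2 ?_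
    by_cases hx : x ∈ B
    · obtain ⟨i, hi⟩ := mem_iUnion.1 (hcover ▸ mem_univ x)
      exact ⟨i.succ, by simp [restrictPartition, hi, hx]⟩
    · exact ⟨0, by simp [restrictPartition, hx]⟩

theorem stepFun_restrictPartition {n : ℕ} (A : Fin n → Set X) (lam : Fin n → ℝ≥0)
    (B : Set X) :
    stepFun (restrictPartition A B) (Fin.cons 0 lam) = B.indicator (stepFun A lam) := by
  ext x
  by_cases hx : x ∈ B
  · simp only [stepFun, restrictPartition, Fin.sum_univ_succ, Fin.cons_zero, Fin.cons_succ,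
      indicator_of_mem hx, indicator_of_notMem (notMem_compl_iff.2 hx), zero_add]
    exact Finset.sum_congr rfl fun i _ => by by_cases hi : x ∈ A i <;> simp [hi, hx]
  · simp [stepFun, restrictPartition, Fin.sum_univ_succ, hx]

variable [MeasurableSpace X] {mu : Set X → ℝ≥0∞}

theorem sum_le_panIntegral {n : ℕ} {A : Fin n → Set X} (hA : IsPanPartition A)
    {lam : Fin n → ℝ≥0} {f : X → ℝ≥0∞} (hf : stepFun A lam ≤ f) :
    ∑ i, (lam i : ℝ≥0∞) * mu (A i) ≤ panIntegral mu f :=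
  le_iSup_of_le n <| le_iSup_of_le A <| le_iSup_of_le hA <| le_iSup_of_le lam <|
    le_iSup_of_le hf le_rfl

theorem panIntegral_mono : Monotone (panIntegral mu) := fun _ _ h =>
  iSup_le fun _ => iSup_le fun _ => iSup_le fun hA => iSup_le fun _ => iSup_le fun hs =>
    sum_le_panIntegral hA fun x => (hs x).trans (h x)

theorem sum_inter_le_panIntegral {n : ℕ} {A : Fin n → Set X} (hA : IsPanPartition A)
    {lam : Fin n → ℝ≥0} {B : Set X} (hB : MeasurableSet B) {f : X → ℝ≥0∞}
    (hf : ∀ x ∈ B, stepFun A lam x ≤ f x) :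
    ∑ i, (lam i : ℝ≥0∞) * mu (A i ∩ B) ≤ panIntegral mu f := by
  have hle : stepFun (restrictPartition A B) (Fin.cons 0 lam) ≤ f := by
    rw [stepFun_restrictPartition]
    exact fun x => indicator_le' hf (fun _ _ => zero_le) x
  simpa [Fin.sum_univ_succ, restrictPartition] using
    sum_le_panIntegral (isPanPartition_restrictPartition hA hB) hle

theorem tendsto_inter_of_continuousFromBelow (hcb : PanContinuousFromBelow mu) {A : Set X}
    (hA : MeasurableSet A) {B : ℕ → Set X} (hB : ∀ k, MeasurableSet (B k)) (hBmono : Monotone B)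
    (hBcover : ⋃ k, B k = univ) : Tendsto (fun k => mu (A ∩ B k)) atTop (𝓝 (mu A)) := by
  simpa [← inter_iUnion, hBcover] using
    hcb (fun k => A ∩ B k) (fun k => hA.inter (hB k)) fun _ _ hkl =>
      inter_subset_inter_right _ (hBmono hkl)

theorem sum_le_iSup_panIntegral (hcb : PanContinuousFromBelow mu) {F : ℕ → X → ℝ≥0∞}
    (hF : ∀ k, Measurable (F k)) (hFmono : Monotone F) {n : ℕ} {A : Fin n → Set X}
    (hA : IsPanPartition A) {lam : Fin n → ℝ≥0}
    (hlt : ∀ x, stepFun A lam x ≠ 0 → stepFun A lam x < ⨆ k, F k x) :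
    ∑ i, (lam i : ℝ≥0∞) * mu (A i) ≤ ⨆ k, panIntegral mu (F k) := by
  set B : ℕ → Set X := fun k => {x | stepFun A lam x ≤ F k x}
  have hBmeas : ∀ k, MeasurableSet (B k) := fun k =>
    measurableSet_le (measurable_stepFun hA.1 lam) (hF k)
  have hBmono : Monotone B := fun _ _ hkl _ hx => hx.trans (hFmono hkl _)
  have hBcover : ⋃ k, B k = univ := by
    refine eq_univ_of_forall fun x => mem_iUnion.2 ?_
    rcases eq_or_ne (stepFun A lam x) 0 with h0 | h0
    · exact ⟨0, by simp [B, h0]⟩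
    · obtain ⟨k, hk⟩ := lt_iSup_iff.1 (hlt x h0)
      exact ⟨k, hk.le⟩
  have hlim : Tendsto (fun k => ∑ i, (lam i : ℝ≥0∞) * mu (A i ∩ B k)) atTop
      (𝓝 (∑ i, (lam i : ℝ≥0∞) * mu (A i))) :=
    tendsto_finsetSum _ fun i _ => ENNReal.Tendsto.const_mul
      (tendsto_inter_of_continuousFromBelow hcb (hA.1 i) hBmeas hBmono hBcover)
      (Or.inr ENNReal.coe_ne_top)
  exact le_of_tendsto' hlim fun k =>
    (sum_inter_le_panIntegral hA (hBmeas k) fun _ hx => hx).trans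
      (le_iSup (fun k => panIntegral mu (F k)) k)

theorem panIntegral_iSup (hcb : PanContinuousFromBelow mu) {F : ℕ → X → ℝ≥0∞}
    (hF : ∀ k, Measurable (F k)) (hFmono : Monotone F) :
    panIntegral mu (⨆ k, F k) = ⨆ k, panIntegral mu (F k) := by
  refine le_antisymm ?_ (iSup_le fun k => panIntegral_mono (le_iSup F k))
  refine iSup_le fun n => iSup_le fun A => iSup_le fun hA => iSup_le fun lam =>
    iSup_le fun hs => ENNReal.le_of_forall_lt_one_mul_le fun a ha => ?_
  set c : ℝ≥0 := a.toNNReal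
  have hc : (c : ℝ≥0∞) = a := ENNReal.coe_toNNReal (ha.trans ENNReal.one_lt_top).ne
  have hlt : ∀ x, stepFun A (c • lam) x ≠ 0 → stepFun A (c • lam) x < ⨆ k, F k x := by
    intro x hx
    rw [stepFun_smul] at hx ⊢
    calc (c : ℝ≥0∞) * stepFun A lam x < 1 * stepFun A lam x :=
          ENNReal.mul_lt_mul_left (right_ne_zero_of_mul hx) (stepFun_ne_top A lam x) (hc ▸ ha)
      _ = stepFun A lam x := one_mul _
      _ ≤ ⨆ k, F k x := (hs x).trans_eq iSup_apply
  calc a * ∑ i, (lam i : ℝ≥0∞) * mu (A i)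
      = ∑ i, ((c • lam) i : ℝ≥0∞) * mu (A i) := by
        simp [← hc, Finset.mul_sum, mul_assoc]
    _ ≤ ⨆ k, panIntegral mu (F k) := sum_le_iSup_panIntegral hcb hF hFmono hA hlt

end PanIntegral

open PanIntegral in
theorem panIntegralOn_tendsto_of_monotone_general [MeasurableSpace X]
    (mu : Set X → ℝ≥0∞) (hcb : PanContinuousFromBelow mu)
    {E : Set X} (hE : MeasurableSet E)
    (f : ℕ → X → ℝ≥0∞) (hf : ∀ k, Measurable (f k))
    (hmono : ∀ k, ∀ x ∈ E, f k x ≤ f (k + 1) x)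
    (g : X → ℝ≥0∞)
    (hlim : ∀ x ∈ E, Filter.Tendsto (fun k => f k x) Filter.atTop (nhds (g x))) :
    Filter.Tendsto (fun k => panIntegralOn mu (f k) E) Filter.atTop
      (nhds (panIntegralOn mu g E)) := by
  have hFmono : Monotone fun k => E.indicator (f k) := monotone_nat_of_le_succ fun k x => by
    by_cases hx : x ∈ E <;> simp [hx, hmono k x]
  have hg : E.indicator g = ⨆ k, E.indicator (f k) := by
    ext x
    rw [iSup_apply]
    refine tendsto_nhds_unique ?_ (tendsto_atTop_iSup fun _ _ hkl => hFmono hkl x)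
    by_cases hx : x ∈ E
    · simpa [hx] using hlim x hx
    · simp [hx]
  rw [panIntegralOn, hg, panIntegral_iSup hcb (fun k => (hf k).indicator hE) hFmono]
  exact tendsto_atTop_iSup fun _ _ hkl => panIntegral_mono (hFmono hkl)

theorem panIntegralOn_tendsto_of_monotone [MeasurableSpace X]
    (mu : Set X → ℝ≥0∞) (hmu : MonotoneMeasure mu) (hcb : PanContinuousFromBelow mu)
    {E : Set X} (hE : MeasurableSet E)
    (f : ℕ → X → ℝ≥0∞) (hf : ∀ k, Measurable (f k))
    (hmono : ∀ k, ∀ x ∈ E, f k x ≤ f (k + 1) x)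
    (g : X → ℝ≥0∞) (hg : Measurable g)
    (hlim : ∀ x ∈ E, Filter.Tendsto (fun k => f k x) Filter.atTop (nhds (g x))) :
    Filter.Tendsto (fun k => panIntegralOn mu (f k) E) Filter.atTop
      (nhds (panIntegralOn mu g E)) :=
  panIntegralOn_tendsto_of_monotone_general mu hcb hE f hf hmono g hlim
end
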